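/- Let γ > 0 and let L : ℝ^m → ℝ be continuous and nonnegative. Then Z(θ) is finite and strictly positive for every θ, F is differentiable on ℝ^m, and its gradient satisfies ∇F(θ) = −γ·(θ − μ(θ)), where μ(θ) is the mean of the probability density p_θ; equivalently, the gradient of the EntropySGD objective −F(θ) equals γ(θ − E_{p_θ}[θ']). -/

import Mathlib

/-!
Since `L ≥ 0`, the integrand is dominated by the Gaussian `exp (-(γ/2) ‖θ - θ'‖²)`, and its
`θ`-gradient `-γ (θ - θ') exp (-L θ' - (γ/2) ‖θ - θ'‖²)` by a multiple of the wider Gaussian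
`exp (-(γ/8) ‖θ₀ - θ'‖²)`, uniformly for `θ` in the unit ball around `θ₀`. Hence `Z` is finite and
positive and may be differentiated under the integral sign, and
`∇F = ∇Z / Z = -γ ∫ (θ - θ') p_θ(θ') dθ' = -γ (θ - μ(θ))`.
-/

open MeasureTheory

/-- The EntropySGD normalization `Z(θ) = ∫ exp(−L(θ') − (γ/2)‖θ−θ'‖²) dθ'`. -/
noncomputable def entropyZ (m : ℕ) (γ : ℝ) (L : EuclideanSpace ℝ (Fin m) → ℝ)
    (θ : EuclideanSpace ℝ (Fin m)) : ℝ :=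
  ∫ θ' : EuclideanSpace ℝ (Fin m), Real.exp (-L θ' - γ / 2 * ‖θ - θ'‖ ^ 2)

/-- The local-entropy objective `F(θ) = log Z(θ)`. -/
noncomputable def entropyF (m : ℕ) (γ : ℝ) (L : EuclideanSpace ℝ (Fin m) → ℝ)
    (θ : EuclideanSpace ℝ (Fin m)) : ℝ :=
  Real.log (entropyZ m γ L θ)

/-- The probability density `p_θ(θ') = exp(−L(θ') − (γ/2)‖θ−θ'‖²)/Z(θ)`. -/
noncomputable def entropyPdf (m : ℕ) (γ : ℝ) (L : EuclideanSpace ℝ (Fin m) → ℝ)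
    (θ θ' : EuclideanSpace ℝ (Fin m)) : ℝ :=
  Real.exp (-L θ' - γ / 2 * ‖θ - θ'‖ ^ 2) / entropyZ m γ L θ

/-- The mean `μ(θ) = ∫ θ' p_θ(θ') dθ'` of the density `p_θ`. -/
noncomputable def entropyMean (m : ℕ) (γ : ℝ) (L : EuclideanSpace ℝ (Fin m) → ℝ)
    (θ : EuclideanSpace ℝ (Fin m)) : EuclideanSpace ℝ (Fin m) :=
  ∫ θ' : EuclideanSpace ℝ (Fin m), entropyPdf m γ L θ θ' • θ'

open Real InnerProductSpace

theorem mul_exp_neg_mul_sq_le {b : ℝ} (hb : 0 < b) (t : ℝ) :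
    t * exp (-b * t ^ 2) ≤ (1 + 1 / b) * exp (-(b / 2) * t ^ 2) := by
  have hgrowth : t ≤ (1 + 1 / b) * exp (b / 2 * t ^ 2) :=
    calc t ≤ (1 + 1 / b) * (b / 2 * t ^ 2 + 1) := by
          field_simp; nlinarith [mul_nonneg hb.le (sq_nonneg (t - 1)), sq_nonneg (t * b)]
      _ ≤ (1 + 1 / b) * exp (b / 2 * t ^ 2) := by gcongr; exact add_one_le_exp _
  calc t * exp (-b * t ^ 2) = t * exp (-(b / 2 * t ^ 2)) * exp (-(b / 2) * t ^ 2) := by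
        rw [mul_assoc, ← exp_add]; ring_nf
    _ ≤ (1 + 1 / b) * exp (-(b / 2) * t ^ 2) := by
        refine mul_le_mul_of_nonneg_right ?_ (exp_nonneg _)
        rwa [exp_neg, ← div_eq_mul_inv, div_le_iff₀ (exp_pos _)]

theorem exp_neg_mul_sq_norm_sub_le {G : Type*} [SeminormedAddCommGroup G] {b : ℝ} (hb : 0 ≤ b)
    {x θ : G} (hx : ‖x - θ‖ ≤ 1) (a : G) :
    exp (-b * ‖x - a‖ ^ 2) ≤ exp b * exp (-(b / 2) * ‖θ - a‖ ^ 2) := by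
  have htri : ‖θ - a‖ ≤ ‖x - a‖ + 1 := by
    have := norm_sub_le_norm_sub_add_norm_sub θ x a
    rw [norm_sub_rev θ x] at this
    linarith
  have hsq : ‖θ - a‖ ^ 2 ≤ 2 * ‖x - a‖ ^ 2 + 2 := by
    nlinarith [norm_nonneg (θ - a), sq_nonneg (‖x - a‖ - 1)]
  rw [← exp_add]
  exact exp_le_exp.2 (by nlinarith [mul_le_mul_of_nonneg_left hsq hb])

theorem integrable_exp_neg_mul_sq_norm {V : Type*} [NormedAddCommGroup V] [InnerProductSpace ℝ V]
    [FiniteDimensional ℝ V] [MeasurableSpace V] [BorelSpace V] {b : ℝ} (hb : 0 < b) :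
    Integrable (fun v : V => exp (-b * ‖v‖ ^ 2)) :=
  Integrable.of_integral_ne_zero <| by
    rw [GaussianFourier.integral_rexp_neg_mul_sq_norm hb]; positivity

section

variable {V : Type*} [SeminormedAddCommGroup V] {L : V → ℝ} {γ : ℝ}

/-- The unnormalized density `Z(θ) p_θ(θ')`. -/
noncomputable def entropyWeight (L : V → ℝ) (γ : ℝ) (θ θ' : V) : ℝ :=
  exp (-L θ' - γ / 2 * ‖θ - θ'‖ ^ 2)

theorem entropyWeight_pos (x a : V) : 0 < entropyWeight L γ x a :=
  exp_pos _

theorem entropyWeight_le (hL0 : ∀ a, 0 ≤ L a) (x a : V) :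
    entropyWeight L γ x a ≤ exp (-(γ / 2) * ‖x - a‖ ^ 2) :=
  exp_le_exp.2 (by linarith [hL0 a])

theorem measurable_entropyWeight [MeasurableSpace V] [OpensMeasurableSpace V]
    (hL : Measurable L) (θ : V) : Measurable (entropyWeight L γ θ) :=
  (hL.neg.sub (((continuous_const.sub continuous_id).norm.measurable.pow_const 2).const_mul _)).exp

end

section

variable {V : Type*} [NormedAddCommGroup V] [InnerProductSpace ℝ V] {L : V → ℝ} {γ : ℝ}

theorem norm_entropyWeight_smul_sub_le (hγ : 0 < γ) (hL0 : ∀ a, 0 ≤ L a) (x a : V) :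
    ‖entropyWeight L γ x a • (x - a)‖ ≤ (1 + 2 / γ) * exp (-(γ / 4) * ‖x - a‖ ^ 2) := by
  rw [norm_smul, norm_of_nonneg (entropyWeight_pos x a).le, mul_comm]
  calc ‖x - a‖ * entropyWeight L γ x a ≤ ‖x - a‖ * exp (-(γ / 2) * ‖x - a‖ ^ 2) := by
        gcongr; exact entropyWeight_le hL0 x a
    _ ≤ (1 + 2 / γ) * exp (-(γ / 4) * ‖x - a‖ ^ 2) := by
        convert mul_exp_neg_mul_sq_le (half_pos hγ) ‖x - a‖ using 3 <;> ring

theorem norm_entropyWeight_smul_sub_le_of_norm_sub_le (hγ : 0 < γ) (hL0 : ∀ a, 0 ≤ L a)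
    {x θ : V} (hx : ‖x - θ‖ ≤ 1) (a : V) :
    ‖entropyWeight L γ x a • (x - a)‖
      ≤ (1 + 2 / γ) * exp (γ / 4) * exp (-(γ / 8) * ‖θ - a‖ ^ 2) := by
  refine (norm_entropyWeight_smul_sub_le hγ hL0 x a).trans ?_
  rw [mul_assoc]
  gcongr
  rw [show γ / 8 = γ / 4 / 2 by ring]
  exact exp_neg_mul_sq_norm_sub_le (by positivity) hx a

theorem hasGradientAt_entropyWeight [CompleteSpace V] (L : V → ℝ) (γ : ℝ) (a x : V) :
    HasGradientAt (fun x => entropyWeight L γ x a)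
      ((-γ) • (entropyWeight L γ x a • (x - a))) x := by
  rw [hasGradientAt_iff_hasFDerivAt]
  refine ((((hasFDerivAt_id x).sub_const a).norm_sq.const_mul (γ / 2)).const_sub (-L a)).exp
    |>.congr_fderiv ?_
  ext y
  simp only [entropyWeight, toDual_apply_apply, real_inner_smul_left, inner_sub_left, id_eq,
    map_sub, ContinuousLinearMap.comp_id, smul_neg, neg_apply, smul_apply, sub_apply,
    coe_innerSL_apply, nsmul_eq_mul, Nat.cast_ofNat, smul_eq_mul, neg_mul, neg_inj]
  ring

variable [FiniteDimensional ℝ V] [MeasurableSpace V] [BorelSpace V]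

theorem integrable_entropyWeight (hγ : 0 < γ) (hL : Measurable L) (hL0 : ∀ a, 0 ≤ L a)
    (θ : V) : Integrable (entropyWeight L γ θ) :=
  ((integrable_exp_neg_mul_sq_norm (half_pos hγ)).comp_sub_left θ).mono'
    (measurable_entropyWeight hL θ).aestronglyMeasurable
    (.of_forall fun a => (norm_of_nonneg (entropyWeight_pos θ a).le).trans_le
      (entropyWeight_le hL0 θ a))

theorem integrable_entropyWeight_smul_sub (hγ : 0 < γ) (hL : Measurable L)
    (hL0 : ∀ a, 0 ≤ L a) (θ : V) :
    Integrable (fun a => entropyWeight L γ θ a • (θ - a)) :=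
  (((integrable_exp_neg_mul_sq_norm (by positivity)).comp_sub_left θ).const_mul _).mono'
    ((measurable_entropyWeight hL θ).smul (measurable_const.sub measurable_id)).aestronglyMeasurable
    (.of_forall (norm_entropyWeight_smul_sub_le hγ hL0 θ))

theorem integral_entropyWeight_pos (hγ : 0 < γ) (hL : Measurable L) (hL0 : ∀ a, 0 ≤ L a)
    (θ : V) : 0 < ∫ a, entropyWeight L γ θ a :=
  integral_exp_pos (integrable_entropyWeight hγ hL hL0 θ)

theorem hasGradientAt_integral_entropyWeight (hγ : 0 < γ) (hL : Measurable L)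
    (hL0 : ∀ a, 0 ≤ L a) (θ : V) :
    HasGradientAt (fun x => ∫ a, entropyWeight L γ x a)
      ((-γ) • ∫ a, entropyWeight L γ θ a • (θ - a)) θ := by
  have hint := (integrable_entropyWeight_smul_sub hγ hL hL0 θ).smul (-γ)
  have hbound : ∀ a, ∀ x ∈ Metric.ball θ 1,
      ‖toDual ℝ V ((-γ) • (entropyWeight L γ x a • (x - a)))‖
        ≤ γ * ((1 + 2 / γ) * exp (γ / 4) * exp (-(γ / 8) * ‖θ - a‖ ^ 2)) := by
    intro a x hx
    rw [LinearIsometryEquiv.norm_map, norm_smul, norm_neg, norm_of_nonneg hγ.le]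
    gcongr
    exact norm_entropyWeight_smul_sub_le_of_norm_sub_le hγ hL0 (mem_ball_iff_norm.1 hx).le a
  have hderiv := hasFDerivAt_integral_of_dominated_of_fderiv_le (μ := volume)
    (F := fun x a => entropyWeight L γ x a)
    (F' := fun x a => toDual ℝ V ((-γ) • (entropyWeight L γ x a • (x - a))))
    (Metric.ball_mem_nhds θ one_pos)
    (.of_forall fun x => (measurable_entropyWeight hL x).aestronglyMeasurable)
    (integrable_entropyWeight hγ hL hL0 θ)
    ((toDual ℝ V).continuous.comp_aestronglyMeasurable hint.aestronglyMeasurable)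
    (.of_forall hbound)
    ((((integrable_exp_neg_mul_sq_norm (by positivity)).comp_sub_left θ).const_mul _).const_mul _)
    (.of_forall fun a x _ => hasGradientAt_iff_hasFDerivAt.1 (hasGradientAt_entropyWeight L γ a x))
  have hcomm : ∫ a, toDual ℝ V ((-γ) • (entropyWeight L γ θ a • (θ - a)))
      = toDual ℝ V (∫ a, (-γ) • (entropyWeight L γ θ a • (θ - a))) :=
    ContinuousLinearMap.integral_comp_commSL (by simp)
      ((toDual ℝ V).toContinuousLinearEquiv : V →SL[starRingEnd ℝ] StrongDual ℝ V) hint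
  rwa [hasGradientAt_iff_hasFDerivAt, ← integral_smul, ← hcomm]

end

theorem HasGradientAt.log {V : Type*} [NormedAddCommGroup V] [InnerProductSpace ℝ V]
    [CompleteSpace V] {f : V → ℝ} {g x : V} (hf : HasGradientAt f g x) (hx : f x ≠ 0) :
    HasGradientAt (fun y => Real.log (f y)) ((f x)⁻¹ • g) x := by
  rw [hasGradientAt_iff_hasFDerivAt, map_smulₛₗ]
  exact (hasGradientAt_iff_hasFDerivAt.1 hf).log hx

theorem sub_integral_div_integral_smul {V : Type*} [NormedAddCommGroup V] [NormedSpace ℝ V]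
    [CompleteSpace V] [MeasurableSpace V] {μ : Measure V} {f : V → ℝ} (θ : V)
    (hf : Integrable f μ) (hf_sub : Integrable (fun a => f a • (θ - a)) μ)
    (hf_ne : ∫ a, f a ∂μ ≠ 0) :
    θ - ∫ a, (f a / ∫ a, f a ∂μ) • a ∂μ = (∫ a, f a ∂μ)⁻¹ • ∫ a, f a • (θ - a) ∂μ := by
  have hfirst : ∫ a, f a • a ∂μ = (∫ a, f a ∂μ) • θ - ∫ a, f a • (θ - a) ∂μ := by
    rw [← integral_smul_const, ← integral_sub (hf.smul_const θ) hf_sub]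
    simp only [smul_sub, sub_sub_cancel]
  simp_rw [div_eq_inv_mul, mul_smul]
  rw [integral_smul, hfirst, smul_sub, inv_smul_smul₀ hf_ne, sub_sub_cancel]

/-- For `γ > 0` and `L` continuous and nonnegative, `Z(θ)` is finite
(the integrand is integrable) and strictly positive for every `θ`, and `F` is
differentiable with `∇F(θ) = −γ·(θ − μ(θ))`. -/
theorem entropySGD_gradient (m : ℕ) (γ : ℝ) (hγ : 0 < γ)
    (L : EuclideanSpace ℝ (Fin m) → ℝ) (hLc : Continuous L) (hLnn : ∀ θ', 0 ≤ L θ') :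
    (∀ θ : EuclideanSpace ℝ (Fin m),
      Integrable (fun θ' : EuclideanSpace ℝ (Fin m) =>
        Real.exp (-L θ' - γ / 2 * ‖θ - θ'‖ ^ 2))) ∧
    (∀ θ : EuclideanSpace ℝ (Fin m), 0 < entropyZ m γ L θ) ∧
    (∀ θ : EuclideanSpace ℝ (Fin m),
      HasGradientAt (entropyF m γ L) ((-γ) • (θ - entropyMean m γ L θ)) θ) := by
  have hL := hLc.measurable
  refine ⟨integrable_entropyWeight hγ hL hLnn, integral_entropyWeight_pos hγ hL hLnn, fun θ => ?_⟩
  have hZ : entropyZ m γ L θ ≠ 0 := (integral_entropyWeight_pos hγ hL hLnn θ).ne'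
  have hmean : θ - entropyMean m γ L θ
      = (entropyZ m γ L θ)⁻¹ • ∫ a, entropyWeight L γ θ a • (θ - a) :=
    sub_integral_div_integral_smul θ (integrable_entropyWeight hγ hL hLnn θ)
      (integrable_entropyWeight_smul_sub hγ hL hLnn θ) hZ
  rw [hmean, smul_comm]
  exact (hasGradientAt_integral_entropyWeight hγ hL hLnn θ).log hZ
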